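/- Let G be a finite group, T a positive integer, 0 < δ ≤ 1/|G|, and ε > 0. Let (Ω, 𝔉, P) be a probability space and let s(t) : Ω → ℝ^G, t = 0,1,2,..., be mutually independent random variables each of whose values is a vector of convex weights on G. Define the random sequence p(t) by p(0) equal to the indicator of the identity element (p(0)(e) = 1, p(0)(g) = 0 for g ≠ e) and p(t+1)(ω) = s(t)(ω) ∗ p(t)(ω). Suppose that for every t, P({ω : the composite weights q(t,T)(ω) = s(t+T−1)(ω) ∗ ⋯ ∗ s(t)(ω) satisfy q(t,T)(ω)(g) > δ for all g ∈ G}) ≥ ε. Then for every γ > 0, lim_{t→∞} P({ω : ‖p(t)(ω) − p̂‖ < γ}) = 1, where p̂(g) = 1/|G| and ‖·‖ is the Euclidean norm on ℝ^G. -/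

import Mathlib

/-- A vector of convex weights on a finite type: nonnegative entries summing to 1. -/
def IsConvexWeights {G : Type*} [Fintype G] (s : G → ℝ) : Prop :=
  (∀ g, 0 ≤ s g) ∧ ∑ g, s g = 1

/-- Group convolution of weight vectors: `(s ∗ p)(g) = ∑ h, s(h) p(h⁻¹ g)`. -/
def groupConv {G : Type*} [Group G] [Fintype G] (s p : G → ℝ) : G → ℝ :=
  fun g => ∑ h : G, s h * p (h⁻¹ * g)

/-- The composite weights describing the evolution from time `t` to `t + T`:
`compWeights s t T = s(t+T−1) ∗ ⋯ ∗ s(t+1) ∗ s(t)` (the empty composite, `T = 0`,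
is the delta distribution at the identity). -/
def compWeights {G : Type*} [Group G] [Fintype G] [DecidableEq G]
    (s : ℕ → G → ℝ) (t : ℕ) : ℕ → G → ℝ
  | 0 => fun g => if g = 1 then 1 else 0
  | T + 1 => groupConv (s (t + T)) (compWeights s t T)

/-! The spread `max p - min p` never increases under convolution with convex weights, and it
shrinks by the factor `1 - |G| δ` across a block `[kT, kT + T)` whose composite weights exceed `δ`
everywhere. The events that the `k`-th block is of this kind depend on disjoint families of the
independent `s t`, so they are independent, and each has probability at least `ε`; by the second
Borel–Cantelli lemma almost surely infinitely many of them occur. Hence `p t → p̂` almost surely,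
and almost sure convergence gives convergence in probability. -/
open Finset Filter MeasureTheory ProbabilityTheory Topology

section Spread

variable {α : Type*} [Fintype α] [Nonempty α]

noncomputable def spread (v : α → ℝ) : ℝ :=
  univ.sup' univ_nonempty v - univ.inf' univ_nonempty v

lemma spread_nonneg (v : α → ℝ) : 0 ≤ spread v :=
  sub_nonneg.2 <| (inf'_le _ (mem_univ (Classical.arbitrary α))).trans (le_sup' _ (mem_univ _))

lemma abs_sub_inv_card_le_spread {v : α → ℝ} (hv : ∑ a, v a = 1) (a : α) :
    |v a - 1 / Fintype.card α| ≤ spread v := by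
  have hcard : (0 : ℝ) < Fintype.card α := by exact_mod_cast Fintype.card_pos
  have hinf : Fintype.card α * univ.inf' univ_nonempty v ≤ 1 := by
    simpa [hv] using card_nsmul_le_sum univ v _ fun b _ => inf'_le v (mem_univ b)
  have hsup : 1 ≤ Fintype.card α * univ.sup' univ_nonempty v := by
    simpa [hv] using sum_le_card_nsmul univ v _ fun b _ => le_sup' v (mem_univ b)
  have hinf' : univ.inf' univ_nonempty v ≤ 1 / Fintype.card α := by
    rw [le_div_iff₀ hcard]; linarith
  have hsup' : 1 / Fintype.card α ≤ univ.sup' univ_nonempty v := by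
    rw [div_le_iff₀ hcard]; linarith
  rw [spread, abs_le]
  constructor <;> linarith [inf'_le v (mem_univ a), le_sup' v (mem_univ a)]

end Spread

lemma tendsto_zero_of_antitone_of_exists_le_mul {a : ℕ → ℝ} (ha : Antitone a)
    (h0 : ∀ n, 0 ≤ a n) {c : ℝ} (hc : c < 1) (h : ∀ n, ∃ m, a m ≤ c * a n) :
    Tendsto a atTop (𝓝 0) := by
  have hbdd : BddBelow (Set.range a) := ⟨0, by rintro _ ⟨n, rfl⟩; exact h0 n⟩
  have hlim := tendsto_atTop_ciInf ha hbdd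
  have hL0 : 0 ≤ ⨅ n, a n := le_ciInf h0
  have hLc : ⨅ n, a n ≤ c * ⨅ n, a n := ge_of_tendsto' (hlim.const_mul c) fun n =>
    let ⟨m, hm⟩ := h n; (ciInf_le hbdd m).trans hm
  rwa [show ⨅ n, a n = 0 by nlinarith] at hlim

section GroupConv

variable {G : Type*} [Group G] [Fintype G]

lemma groupConv_apply_eq_add (q v : G → ℝ) (δ : ℝ) (g : G) :
    groupConv q v g = δ * ∑ h, v h + ∑ h, (q h - δ) * v (h⁻¹ * g) := by
  have hshift : ∑ h, v (h⁻¹ * g) = ∑ h, v h :=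
    Fintype.sum_equiv ((Equiv.inv G).trans (Equiv.mulRight g)) _ _ fun _ => rfl
  simp only [groupConv, sub_mul, sum_sub_distrib, ← mul_sum, hshift]
  ring

-- With `δ = 0`: convolution with convex weights does not increase the spread.
lemma spread_groupConv_le {q : G → ℝ} (hq : ∑ h, q h = 1) {δ : ℝ} (hδ : ∀ h, δ ≤ q h)
    (v : G → ℝ) : spread (groupConv q v) ≤ (1 - Fintype.card G * δ) * spread v := by
  set M := univ.sup' univ_nonempty v
  set m := univ.inf' univ_nonempty v
  have hmass : ∑ h, (q h - δ) = 1 - Fintype.card G * δ := by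
    simp [sum_sub_distrib, hq]
  have hupper : ∀ g, groupConv q v g ≤ δ * ∑ h, v h + (1 - Fintype.card G * δ) * M := by
    intro g
    rw [groupConv_apply_eq_add q v δ, ← hmass, sum_mul]
    gcongr with h
    exacts [sub_nonneg.2 (hδ h), le_sup' v (mem_univ _)]
  have hlower : ∀ g, δ * ∑ h, v h + (1 - Fintype.card G * δ) * m ≤ groupConv q v g := by
    intro g
    rw [groupConv_apply_eq_add q v δ, ← hmass, sum_mul]
    gcongr with h
    exacts [sub_nonneg.2 (hδ h), inf'_le v (mem_univ _)]
  have := sup'_le univ_nonempty _ fun g _ => hupper g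
  have := le_inf' univ_nonempty _ fun g _ => hlower g
  rw [spread, spread]
  linarith

lemma IsConvexWeights.groupConv {q v : G → ℝ} (hq : IsConvexWeights q)
    (hv : IsConvexWeights v) : IsConvexWeights (groupConv q v) := by
  refine ⟨fun g => sum_nonneg fun h _ => mul_nonneg (hq.1 h) (hv.1 _), ?_⟩
  have hshift : ∀ h : G, ∑ g, v (h⁻¹ * g) = 1 := fun h =>
    (Fintype.sum_equiv (Equiv.mulLeft h⁻¹) _ _ fun _ => rfl).trans hv.2
  rw [← hq.2]
  unfold _root_.groupConv
  rw [sum_comm]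
  simp [← mul_sum, hshift]

lemma groupConv_assoc (a b c : G → ℝ) :
    groupConv (groupConv a b) c = groupConv a (groupConv b c) := by
  funext g
  simp only [groupConv, sum_mul, mul_sum]
  rw [sum_comm]
  refine sum_congr rfl fun h _ => ?_
  rw [← Equiv.sum_comp (Equiv.mulLeft h)]
  simp [mul_assoc]

variable [DecidableEq G]

lemma delta_groupConv (v : G → ℝ) :
    groupConv (fun g => if g = 1 then 1 else 0) v = v := by
  funext g
  simp [groupConv]

lemma isConvexWeights_delta : IsConvexWeights (fun g : G => if g = 1 then (1 : ℝ) else 0) :=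
  ⟨fun g => by positivity, by simp⟩

lemma isConvexWeights_compWeights {s : ℕ → G → ℝ} (hs : ∀ n, IsConvexWeights (s n)) (t : ℕ) :
    ∀ T, IsConvexWeights (compWeights s t T)
  | 0 => isConvexWeights_delta
  | T + 1 => (hs _).groupConv (isConvexWeights_compWeights hs t T)

lemma eq_groupConv_compWeights {s p : ℕ → G → ℝ}
    (hstep : ∀ t, p (t + 1) = groupConv (s t) (p t)) (t : ℕ) :
    ∀ T, p (t + T) = groupConv (compWeights s t T) (p t)
  | 0 => (delta_groupConv _).symm
  | T + 1 => by
    rw [← add_assoc, hstep, eq_groupConv_compWeights hstep t T, ← groupConv_assoc]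
    rfl

theorem tendsto_uniform_of_frequently_lt_compWeights {s p : ℕ → G → ℝ}
    (hs : ∀ t, IsConvexWeights (s t)) (hp0 : p 0 = fun g => if g = 1 then 1 else 0)
    (hstep : ∀ t, p (t + 1) = groupConv (s t) (p t)) {T : ℕ} (hT : 0 < T) {δ : ℝ}
    (hδ1 : δ ≤ 1 / Fintype.card G) (hδ0 : 0 < δ)
    (hfreq : ∃ᶠ k in atTop, ∀ g, δ < compWeights s (k * T) T g) :
    Tendsto p atTop (𝓝 fun _ => 1 / Fintype.card G) := by
  have hp : ∀ t, IsConvexWeights (p t) := by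
    intro t
    induction t with
    | zero => exact hp0 ▸ isConvexWeights_delta
    | succ t ih => exact hstep t ▸ (hs t).groupConv ih
  have hanti : Antitone fun t => spread (p t) := by
    refine antitone_nat_of_succ_le fun t => ?_
    simpa only [hstep, mul_zero, sub_zero, one_mul] using
      spread_groupConv_le (hs t).2 (hs t).1 (p t)
  have hcard : 0 < (Fintype.card G : ℝ) := by exact_mod_cast Fintype.card_pos
  have hc0 : 0 ≤ 1 - Fintype.card G * δ := by
    rw [le_div_iff₀ hcard] at hδ1; linarith
  have hcontract : ∀ n, ∃ m, spread (p m) ≤ (1 - Fintype.card G * δ) * spread (p n) := by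
    intro n
    obtain ⟨k, hkn, hk⟩ := hfreq.forall_exists_of_atTop n
    refine ⟨k * T + T, ?_⟩
    calc spread (p (k * T + T))
        ≤ (1 - Fintype.card G * δ) * spread (p (k * T)) := by
          rw [eq_groupConv_compWeights hstep]
          exact spread_groupConv_le (isConvexWeights_compWeights hs _ _).2
            (fun g => (hk g).le) _
      _ ≤ (1 - Fintype.card G * δ) * spread (p n) :=
          mul_le_mul_of_nonneg_left (hanti (hkn.trans (Nat.le_mul_of_pos_right k hT))) hc0
  have hspread : Tendsto (fun t => spread (p t)) atTop (𝓝 0) :=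
    tendsto_zero_of_antitone_of_exists_le_mul hanti (fun t => spread_nonneg _)
      (by nlinarith) hcontract
  refine tendsto_pi_nhds.2 fun g => (tendsto_iff_dist_tendsto_zero).2 ?_
  exact squeeze_zero (fun _ => dist_nonneg)
    (fun t => abs_sub_inv_card_le_spread (hp t).2 g) hspread

end GroupConv

section Probability

variable {Ω : Type*} {mΩ : MeasurableSpace Ω} {μ : Measure Ω}

lemma continuous_groupConv {G : Type*} [Group G] [Fintype G] :
    Continuous fun x : (G → ℝ) × (G → ℝ) => groupConv x.1 x.2 := by
  unfold groupConv
  fun_prop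

lemma measurable_compWeights {G : Type*} [Group G] [Fintype G] [DecidableEq G]
    {f : ℕ → Ω → G → ℝ} {t : ℕ} :
    ∀ {T}, (∀ i ∈ Set.Ico t (t + T), Measurable (f i)) →
      Measurable fun ω => compWeights (fun n => f n ω) t T
  | 0, _ => measurable_const
  | T + 1, hf => continuous_groupConv.measurable.comp <|
      (hf (t + T) ⟨by omega, by omega⟩).prodMk
        (measurable_compWeights fun i hi => hf i ⟨hi.1, Nat.lt_succ_of_lt hi.2⟩)

lemma iIndepSet_of_measurableSet_iSup_Ico {m : ℕ → MeasurableSpace Ω} (hle : ∀ i, m i ≤ mΩ)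
    (hind : iIndep m μ) {T : ℕ} {A : ℕ → Set Ω}
    (hA : ∀ k, MeasurableSet[⨆ i ∈ Set.Ico (k * T) (k * T + T), m i] (A k)) :
    iIndepSet A μ := by
  have := hind.isProbabilityMeasure
  have hmono : ∀ {k} {S : Set ℕ}, Set.Ico (k * T) (k * T + T) ⊆ S →
      MeasurableSet[⨆ i ∈ S, m i] (A k) := fun hS =>
      MeasurableSpace.le_def.1 (biSup_mono fun i hi => hS hi) _ (hA _)
  rw [iIndepSet_iff_meas_biInter fun k => iSup₂_le (fun i _ => hle i) _ (hA k)]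
  intro S
  induction S using Finset.induction_on_max with
  | empty => simp
  | insert a S hlt ih =>
    have hpast : MeasurableSet[⨆ i ∈ Set.Iio (a * T), m i] (⋂ k ∈ S, A k) :=
      Finset.measurableSet_biInter S fun k hk => hmono fun i hi =>
        Set.mem_Iio.2 (hi.2.trans_le (by nlinarith [hlt k hk]))
    have hnow : MeasurableSet[⨆ i ∈ Set.Ici (a * T), m i] (A a) := hmono fun i hi => hi.1
    rw [Finset.set_biInter_insert, Finset.prod_insert fun ha => (hlt a ha).false, ← ih,
      Set.inter_comm, mul_comm]
    exact (Indep_iff _ _ _).1 (indep_iSup_of_disjoint hle hind (Set.Iio_disjoint_Ici le_rfl))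
      _ _ hpast hnow

lemma ae_frequently_mem_of_iIndepSet {A : ℕ → Set Ω} (hmeas : ∀ k, MeasurableSet (A k))
    (hind : iIndepSet A μ) {c : ENNReal} (hc : c ≠ 0) (hA : ∀ k, c ≤ μ (A k)) :
    ∀ᵐ ω ∂μ, ∃ᶠ k in atTop, ω ∈ A k := by
  have := hind.isProbabilityMeasure
  have hsum : ∑' k, μ (A k) = ⊤ :=
    top_unique ((ENNReal.tsum_const_eq_top_of_ne_zero hc).ge.trans (ENNReal.tsum_le_tsum hA))
  have hlimsup := (mem_ae_iff_prob_eq_one (MeasurableSet.measurableSet_limsup hmeas)).2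
    (measure_limsup_eq_one hmeas hind hsum)
  filter_upwards [hlimsup] with ω hω
  exact mem_limsup_iff_frequently_mem.1 hω

lemma tendsto_measure_lt_of_ae_tendsto [IsProbabilityMeasure μ] {X : ℕ → Ω → ℝ} {c γ : ℝ}
    (hX : ∀ᵐ ω ∂μ, Tendsto (X · ω) atTop (𝓝 c)) (hγ : c < γ) :
    Tendsto (fun t => μ {ω | X t ω < γ}) atTop (𝓝 1) := by
  set E : ℕ → Set Ω := fun t => {ω | ∀ t' ≥ t, X t' ω < γ}
  have hE : Monotone E := fun t t' htt' ω hω n hn => hω n (htt'.trans hn)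
  have hae : ∀ᵐ ω ∂μ, ω ∈ ⋃ t, E t := hX.mono fun ω hω =>
    Set.mem_iUnion.2 (eventually_atTop.1 (hω.eventually_lt_const hγ))
  have hunion : μ (⋃ t, E t) = 1 := by
    rw [measure_congr (ae_eq_univ.2 (ae_iff.1 hae)), measure_univ]
  have hlower : Tendsto (fun t => μ (E t)) atTop (𝓝 1) :=
    hunion ▸ tendsto_measure_iUnion_atTop hE
  refine tendsto_of_tendsto_of_tendsto_of_le_of_le hlower tendsto_const_nhds (fun t => ?_)
    fun t => prob_le_one
  exact measure_mono fun _ (hω : ∀ t' ≥ t, _) => hω t le_rfl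

end Probability

theorem randomized_convergence_in_probability
    {G : Type*} [Group G] [Fintype G] [DecidableEq G]
    {Ω : Type*} [MeasurableSpace Ω] (P : MeasureTheory.Measure Ω)
    [MeasureTheory.IsProbabilityMeasure P]
    (T : ℕ) (hT : 0 < T)
    (δ : ℝ) (hδ0 : 0 < δ) (hδ1 : δ ≤ 1 / (Fintype.card G : ℝ))
    (ε : ℝ) (hε : 0 < ε)
    (s : ℕ → Ω → G → ℝ)
    (hmeas : ∀ t, Measurable (s t))
    (hindep : ProbabilityTheory.iIndepFun s P)
    (hconv : ∀ (t : ℕ) (ω : Ω), IsConvexWeights (s t ω))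
    (p : ℕ → Ω → G → ℝ)
    (hp0 : ∀ ω : Ω, p 0 ω = fun g => if g = 1 then 1 else 0)
    (hstep : ∀ (t : ℕ) (ω : Ω), p (t + 1) ω = groupConv (s t ω) (p t ω))
    (hq : ∀ t : ℕ, ENNReal.ofReal ε
        ≤ P {ω : Ω | ∀ g : G, δ < compWeights (fun n => s n ω) t T g}) :
    ∀ γ : ℝ, 0 < γ →
      Filter.Tendsto
        (fun t => P {ω : Ω |
          Real.sqrt (∑ g : G, (p t ω g - 1 / (Fintype.card G : ℝ)) ^ 2) < γ})
        Filter.atTop (nhds 1) := by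
  set A : ℕ → Set Ω := fun k => {ω | ∀ g, δ < compWeights (fun n => s n ω) (k * T) T g}
  have hle (i : ℕ) : MeasurableSpace.comap (s i) inferInstance ≤ ‹MeasurableSpace Ω› :=
    (hmeas i).comap_le
  have hentries : MeasurableSet {v : G → ℝ | ∀ g, δ < v g} := by measurability
  have hA (k : ℕ) : MeasurableSet[⨆ i ∈ Set.Ico (k * T) (k * T + T),
      MeasurableSpace.comap (s i) inferInstance] (A k) :=
    measurable_compWeights (fun i hi => (comap_measurable (s i)).mono
      (le_biSup (fun i => MeasurableSpace.comap (s i) inferInstance) hi) le_rfl) hentries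
  have hgood : ∀ᵐ ω ∂P, ∃ᶠ k in atTop, ω ∈ A k :=
    ae_frequently_mem_of_iIndepSet (fun k => iSup₂_le (fun i _ => hle i) _ (hA k))
      (iIndepSet_of_measurableSet_iSup_Ico hle ((iIndepFun_iff_iIndep _ _ _).1 hindep) hA)
      (ENNReal.ofReal_pos.2 hε).ne' fun k => hq (k * T)
  refine fun γ hγ => tendsto_measure_lt_of_ae_tendsto (c := 0) ?_ hγ
  filter_upwards [hgood] with ω hω
  have hlim := tendsto_uniform_of_frequently_lt_compWeights (p := (p · ω))
    (fun t => hconv t ω) (hp0 ω) (fun t => hstep t ω) hT hδ1 hδ0 hω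
  have hcont : Continuous fun v : G → ℝ => √(∑ g, (v g - 1 / (Fintype.card G : ℝ)) ^ 2) := by
    fun_prop
  simpa [Function.comp_def] using (hcont.tendsto _).comp hlim
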